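/- Let {w^k} be a sequence generated by the projected gradient iteration w^{k+1} ∈ P_{A_s}(w^k − λ∇f(w^k)) with w^0 ∈ A_s, and let w* be an accumulation point of {w^k} such that P_{A_s}(w* − λ∇f(w*)) is a singleton. Suppose further that there exists γ ∈ [0,1) such that for every J ∈ I_{w*} and all w, w′ ∈ A_J, ‖(w − λ∇f(w)) − (w′ − λ∇f(w′))‖ ≤ γ‖w − w′‖ (the gradient step map is a γ-contraction on each A_J with J ∈ I_{w*}). Then {w^k} converges to w* Q-linearly: there exists N₂ ∈ ℕ such that ‖w^{k+1} − w*‖ ≤ γ‖w^k − w*‖ for all k ≥ N₂. -/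

import Mathlib

open Filter Topology

noncomputable section

def spSet (n s : ℕ) : Set (EuclideanSpace ℝ (Fin n)) :=
  {w | (Finset.univ.filter fun i => w i ≠ 0).card ≤ s}

def projSet {n : ℕ} (A : Set (EuclideanSpace ℝ (Fin n))) (z : EuclideanSpace ℝ (Fin n)) :
    Set (EuclideanSpace ℝ (Fin n)) :=
  {y | y ∈ A ∧ ∀ x ∈ A, ‖z - y‖ ≤ ‖z - x‖}

def coordSub {n : ℕ} (J : Finset (Fin n)) : Set (EuclideanSpace ℝ (Fin n)) :=
  {w | ∀ i ∉ J, w i = 0}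

def coordRestrict {n : ℕ} (J : Finset (Fin n)) (v : EuclideanSpace ℝ (Fin n)) :
    EuclideanSpace ℝ (Fin n) :=
  (EuclideanSpace.equiv (Fin n) ℝ).symm (fun i => if i ∈ J then v i else 0)

/-!
Projected gradient with step `lam < 1 / L` decreases `f` by at least a multiple of
`‖w (k + 1) - w k‖ ^ 2`, so the steps tend to `0` and the accumulation point `w*` is a fixed point:
`w* ∈ P (z*)` with `z* = w* - lam • f' w*`, hence `P (z*) = {w*}`. Uniqueness of this projection
forces a strict gap between the entries of `z*` on `supp w*` and those off it, so every projection
of a point near `z*` keeps `supp w*`; every point near `w*` keeps `supp w*` as well. Once `w k` is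
close to `w*`, both lie in a common `A_J`, the contraction gives `‖z k - z*‖ ≤ γ ‖w k - w*‖`, and a
projection of `z k` whose support contains `supp w*` is, coordinatewise, no farther from `w*` than
`z k` is from `z*`. So the error contracts by `γ` and the iterates never leave the neighbourhood.
-/

section Descent

variable {F : Type*} [NormedAddCommGroup F] [InnerProductSpace ℝ F] [CompleteSpace F]

theorem le_add_inner_add_sq_of_lipschitz_gradient {f : F → ℝ} {f' : F → F} {L : ℝ}
    (hgrad : ∀ x, HasGradientAt f (f' x) x)
    (hlip : ∀ x y, ‖f' x - f' y‖ ≤ L * ‖x - y‖) (x y : F) :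
    f y ≤ f x + inner ℝ (f' x) (y - x) + L / 2 * ‖y - x‖ ^ 2 := by
  set d := y - x
  let g : ℝ → ℝ := fun t =>
    f (x + t • d) - t * inner ℝ (f' x) d - t ^ 2 * (L / 2 * ‖d‖ ^ 2)
  have hg : ∀ t : ℝ, HasDerivAt g
      (inner ℝ (f' (x + t • d) - f' x) d - t * (L * ‖d‖ ^ 2)) t := by
    intro t
    have hline : HasDerivAt (fun t : ℝ => x + t • d) d t := by
      simpa using ((hasDerivAt_id t).smul_const d).const_add x
    have hf := (hgrad (x + t • d)).hasFDerivAt.comp_hasDerivAt t hline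
    simp only [InnerProductSpace.toDual_apply_apply] at hf
    refine ((hf.sub ((hasDerivAt_id t).mul_const (inner ℝ (f' x) d))).sub
      ((hasDerivAt_pow 2 t).mul_const (L / 2 * ‖d‖ ^ 2))).congr_deriv ?_
    rw [inner_sub_left]
    ring
  have hanti : AntitoneOn g (Set.Icc 0 1) := by
    refine antitoneOn_of_deriv_nonpos (convex_Icc 0 1)
      (fun t _ => (hg t).continuousAt.continuousWithinAt)
      (fun t _ => (hg t).differentiableAt.differentiableWithinAt) fun t ht => ?_
    rw [interior_Icc] at ht
    rw [(hg t).deriv, sub_nonpos]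
    calc inner ℝ (f' (x + t • d) - f' x) d ≤ ‖f' (x + t • d) - f' x‖ * ‖d‖ :=
          real_inner_le_norm _ _
      _ ≤ L * ‖x + t • d - x‖ * ‖d‖ := by gcongr; exact hlip _ _
      _ = t * (L * ‖d‖ ^ 2) := by
          rw [add_sub_cancel_left, norm_smul, Real.norm_of_nonneg ht.1.le]
          ring
  have h01 : g 1 ≤ g 0 :=
    hanti (Set.left_mem_Icc.2 zero_le_one) (Set.right_mem_Icc.2 zero_le_one) zero_le_one
  norm_num [g, d] at h01
  linarith

end Descent

theorem tendsto_sub_of_sufficient_decrease {E : Type*} [NormedAddCommGroup E] {u : ℕ → E}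
    {F : ℕ → ℝ} {c B : ℝ} (hc : 0 < c) (hB : ∀ k, B ≤ F k)
    (hdec : ∀ k, F (k + 1) + c * ‖u (k + 1) - u k‖ ^ 2 ≤ F k) :
    Tendsto (fun k => u (k + 1) - u k) atTop (𝓝 0) := by
  have hsum : Summable fun k => c * ‖u (k + 1) - u k‖ ^ 2 := by
    refine summable_of_sum_range_le (c := F 0 - B) (fun k => by positivity) fun N => ?_
    calc ∑ k ∈ Finset.range N, c * ‖u (k + 1) - u k‖ ^ 2
        ≤ ∑ k ∈ Finset.range N, (F k - F (k + 1)) :=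
          Finset.sum_le_sum fun k _ => by linarith [hdec k]
      _ = F 0 - F N := Finset.sum_range_sub' F N
      _ ≤ F 0 - B := by linarith [hB N]
  have hsq := (hsum.tendsto_atTop_zero.const_mul c⁻¹).sqrt
  simp only [← mul_assoc, inv_mul_cancel₀ hc.ne', one_mul, Real.sqrt_sq (norm_nonneg _),
    mul_zero, Real.sqrt_zero] at hsq
  exact tendsto_zero_iff_norm_tendsto_zero.2 hsq

theorem forall_ge_succ_le_mul_of_lt {u : ℕ → ℝ} {γ ε : ℝ} {K : ℕ} (hγ : γ ≤ 1)
    (hu : ∀ k, 0 ≤ u k) (hstep : ∀ k, u k < ε → u (k + 1) ≤ γ * u k) (hK : u K < ε) :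
    ∀ k ≥ K, u (k + 1) ≤ γ * u k := by
  have hlt : ∀ k ≥ K, u k < ε := by
    refine Nat.le_induction hK fun k _ ih => ?_
    exact ((hstep k ih).trans (mul_le_of_le_one_left (hu k) hγ)).trans_lt ih
  exact fun k hk => hstep k (hlt k hk)

section SparseProjection

open Finset

variable {n s : ℕ}

def coordSupport (y : EuclideanSpace ℝ (Fin n)) : Finset (Fin n) :=
  univ.filter fun i => y i ≠ 0

@[simp] lemma mem_coordSupport {y : EuclideanSpace ℝ (Fin n)} {i : Fin n} :
    i ∈ coordSupport y ↔ y i ≠ 0 := by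
  simp [coordSupport]

def updateCoord (y : EuclideanSpace ℝ (Fin n)) (i : Fin n) (a : ℝ) :
    EuclideanSpace ℝ (Fin n) :=
  WithLp.toLp 2 (Function.update y.ofLp i a)

@[simp] lemma updateCoord_apply (y : EuclideanSpace ℝ (Fin n)) (i : Fin n) (a : ℝ)
    (j : Fin n) : updateCoord y i a j = if j = i then a else y j := by
  simp [updateCoord, Function.update_apply]

lemma norm_sub_updateCoord_sq (z y : EuclideanSpace ℝ (Fin n)) (i : Fin n) (a : ℝ) :
    ‖z - updateCoord y i a‖ ^ 2 = ‖z - y‖ ^ 2 - (z i - y i) ^ 2 + (z i - a) ^ 2 := by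
  simp only [EuclideanSpace.norm_sq_eq, PiLp.sub_apply, Real.norm_eq_abs, sq_abs]
  rw [← add_sum_erase _ _ (mem_univ i), ← add_sum_erase _ _ (mem_univ i)]
  have hrest : ∑ j ∈ univ.erase i, (z j - updateCoord y i a j) ^ 2 =
      ∑ j ∈ univ.erase i, (z j - y j) ^ 2 :=
    sum_congr rfl fun j hj => by rw [updateCoord_apply, if_neg (ne_of_mem_erase hj)]
  rw [hrest, updateCoord_apply, if_pos rfl]
  ring

lemma coordSupport_updateCoord_subset (y : EuclideanSpace ℝ (Fin n)) (i : Fin n) (a : ℝ) :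
    coordSupport (updateCoord y i a) ⊆ insert i (coordSupport y) := by
  intro j hj
  by_cases hji : j = i
  · exact hji ▸ mem_insert_self _ _
  · simp_all

lemma coordSupport_updateCoord_zero (y : EuclideanSpace ℝ (Fin n)) (i : Fin n) :
    coordSupport (updateCoord y i 0) = (coordSupport y).erase i := by
  ext j
  by_cases hji : j = i <;> simp [hji]

lemma apply_eq_of_mem_projSet_of_updateCoord_mem {A : Set (EuclideanSpace ℝ (Fin n))}
    {y z : EuclideanSpace ℝ (Fin n)} (hy : y ∈ projSet A z) {i : Fin n}
    (hA : updateCoord y i (z i) ∈ A) : y i = z i := by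
  have h := pow_le_pow_left₀ (norm_nonneg _) (hy.2 _ hA) 2
  rw [norm_sub_updateCoord_sq, sub_self] at h
  nlinarith [sq_nonneg (z i - y i)]

lemma apply_eq_of_mem_projSet {y z : EuclideanSpace ℝ (Fin n)} (hy : y ∈ projSet (spSet n s) z)
    {i : Fin n} (hi : y i ≠ 0) : y i = z i := by
  refine apply_eq_of_mem_projSet_of_updateCoord_mem hy ?_
  exact (card_le_card ((coordSupport_updateCoord_subset y i _).trans
    (insert_eq_of_mem (mem_coordSupport.2 hi)).subset)).trans hy.1

lemma apply_eq_zero_of_mem_projSet_of_card_lt {y z : EuclideanSpace ℝ (Fin n)}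
    (hy : y ∈ projSet (spSet n s) z) (hcard : #(coordSupport y) < s) {i : Fin n} (hi : y i = 0) :
    z i = 0 := by
  refine hi ▸ (apply_eq_of_mem_projSet_of_updateCoord_mem hy ?_).symm
  exact (card_le_card (coordSupport_updateCoord_subset y i _)).trans
    ((card_insert_le _ _).trans hcard)

lemma apply_eq_of_mem_projSet_of_subset {y z : EuclideanSpace ℝ (Fin n)}
    (hy : y ∈ projSet (spSet n s) z) {J : Finset (Fin n)} (hJ : #J ≤ s)
    (hyJ : coordSupport y ⊆ J) {i : Fin n} (hi : i ∈ J) : y i = z i :=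
  apply_eq_of_mem_projSet_of_updateCoord_mem hy <|
    (card_le_card ((coordSupport_updateCoord_subset y i _).trans (insert_subset hi hyJ))).trans hJ

def swapCoord (y z : EuclideanSpace ℝ (Fin n)) (i j : Fin n) : EuclideanSpace ℝ (Fin n) :=
  updateCoord (updateCoord y i 0) j (z j)

lemma swapCoord_mem_spSet {y : EuclideanSpace ℝ (Fin n)} (hy : y ∈ spSet n s)
    (z : EuclideanSpace ℝ (Fin n)) {i : Fin n} (hi : y i ≠ 0) (j : Fin n) :
    swapCoord y z i j ∈ spSet n s := by
  refine (card_le_card (coordSupport_updateCoord_subset _ _ _)).trans ?_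
  rw [coordSupport_updateCoord_zero]
  refine (card_insert_le _ _).trans ?_
  rw [card_erase_add_one (mem_coordSupport.2 hi)]
  exact hy

lemma norm_sub_swapCoord_sq {y z : EuclideanSpace ℝ (Fin n)} {i j : Fin n} (hij : i ≠ j)
    (hyi : y i = z i) (hyj : y j = 0) :
    ‖z - swapCoord y z i j‖ ^ 2 = ‖z - y‖ ^ 2 + z i ^ 2 - z j ^ 2 := by
  rw [swapCoord, norm_sub_updateCoord_sq, norm_sub_updateCoord_sq, updateCoord_apply,
    if_neg hij.symm, hyi, hyj]
  ring

lemma abs_apply_le_of_mem_projSet {y z : EuclideanSpace ℝ (Fin n)}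
    (hy : y ∈ projSet (spSet n s) z) {i j : Fin n} (hi : y i = 0) (hj : y j ≠ 0) :
    |z i| ≤ |z j| := by
  have hij : j ≠ i := fun h => hj (h ▸ hi)
  have h := pow_le_pow_left₀ (norm_nonneg _)
    (hy.2 _ (swapCoord_mem_spSet hy.1 z hj i)) 2
  rw [norm_sub_swapCoord_sq hij (apply_eq_of_mem_projSet hy hj) hi] at h
  exact sq_le_sq.1 (by linarith)

lemma abs_apply_lt_of_projSet_eq_singleton {w z : EuclideanSpace ℝ (Fin n)}
    (hP : projSet (spSet n s) z = {w}) {i j : Fin n} (hi : w i ≠ 0) (hj : w j = 0) :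
    |z j| < |z i| := by
  have hw : w ∈ projSet (spSet n s) z := hP.symm ▸ rfl
  have hij : i ≠ j := fun h => hi (h ▸ hj)
  by_contra! hle
  have hdist : ‖z - swapCoord w z i j‖ ≤ ‖z - w‖ := by
    refine pow_le_pow_iff_left₀ (norm_nonneg _) (norm_nonneg _) two_ne_zero |>.1 ?_
    rw [norm_sub_swapCoord_sq hij (apply_eq_of_mem_projSet hw hi) hj]
    nlinarith [sq_le_sq.2 hle]
  have hswap : swapCoord w z i j ∈ projSet (spSet n s) z :=
    ⟨swapCoord_mem_spSet hw.1 z hi j, fun x hx => hdist.trans (hw.2 x hx)⟩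
  rw [hP, Set.mem_singleton_iff] at hswap
  apply hi
  rw [← hswap, swapCoord, updateCoord_apply, if_neg hij, updateCoord_apply, if_pos rfl]

lemma norm_le_norm_of_abs_apply_le {ι : Type*} [Fintype ι] {a b : EuclideanSpace ℝ ι}
    (h : ∀ i, |a i| ≤ |b i|) : ‖a‖ ≤ ‖b‖ := by
  simp only [EuclideanSpace.norm_eq]
  gcongr with i
  simpa only [Real.norm_eq_abs] using h i

lemma norm_sub_le_of_mem_projSet {y z w z' : EuclideanSpace ℝ (Fin n)}
    (hy : y ∈ projSet (spSet n s) z) (hw : w ∈ projSet (spSet n s) z')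
    (hwy : coordSupport w ⊆ coordSupport y) : ‖y - w‖ ≤ ‖z - z'‖ := by
  refine norm_le_norm_of_abs_apply_le fun i => ?_
  by_cases hyi : y i = 0
  · have hwi : w i = 0 :=
      by_contra fun h => mem_coordSupport.1 (hwy (mem_coordSupport.2 h)) hyi
    simp [hyi, hwi]
  · rw [PiLp.sub_apply, PiLp.sub_apply, apply_eq_of_mem_projSet hy hyi,
      apply_eq_of_mem_projSet_of_subset hw hy.1 hwy (mem_coordSupport.2 hyi)]

lemma eventually_coordSupport_subset (w : EuclideanSpace ℝ (Fin n)) :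
    ∀ᶠ x in 𝓝 w, coordSupport w ⊆ coordSupport x := by
  have h : ∀ i, ∀ᶠ x in 𝓝 w, w i ≠ 0 → x i ≠ 0 := fun i =>
    eventually_imp_distrib_left.2 fun hi =>
      (PiLp.continuous_apply 2 _ i).continuousAt.eventually_ne hi
  filter_upwards [eventually_all.2 h] with x hx i hi
  exact mem_coordSupport.2 (hx i (mem_coordSupport.1 hi))

lemma isClosed_spSet : IsClosed (spSet n s) := by
  refine isOpen_compl_iff.1 (isOpen_iff_mem_nhds.2 fun w hw => ?_)
  filter_upwards [eventually_coordSupport_subset w] with x hx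
  exact fun hxs => hw ((card_le_card hx).trans hxs)

lemma eventually_coordSupport_subset_of_projSet_eq_singleton {w z : EuclideanSpace ℝ (Fin n)}
    (hP : projSet (spSet n s) z = {w}) :
    ∀ᶠ z' in 𝓝 z, ∀ y ∈ projSet (spSet n s) z', coordSupport w ⊆ coordSupport y := by
  have hw : w ∈ projSet (spSet n s) z := hP.symm ▸ rfl
  have hwz : coordSupport w ⊆ coordSupport z := fun i hi => by
    rw [mem_coordSupport, ← apply_eq_of_mem_projSet hw (mem_coordSupport.1 hi)]
    exact mem_coordSupport.1 hi
  have hgap : ∀ i j, ∀ᶠ z' in 𝓝 z, w i ≠ 0 → w j = 0 → |z' j| < |z' i| := fun i j =>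
    eventually_imp_distrib_left.2 fun hi => eventually_imp_distrib_left.2 fun hj =>
      ((PiLp.continuous_apply 2 _ j).abs.continuousAt).eventually_lt
        (PiLp.continuous_apply 2 _ i).abs.continuousAt
        (abs_apply_lt_of_projSet_eq_singleton hP hi hj)
  filter_upwards [eventually_coordSupport_subset z,
    eventually_all.2 fun i => eventually_all.2 (hgap i)] with z' hz' hgap' y hy
  by_contra hsub
  obtain ⟨i, hiw, hiy⟩ := not_subset.1 hsub
  rw [mem_coordSupport, not_not] at hiy
  by_cases hcard : #(coordSupport y) < s
  · exact mem_coordSupport.1 (hz' (hwz hiw))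
      (apply_eq_zero_of_mem_projSet_of_card_lt hy hcard hiy)
  · -- `y` has `s ≥ #(coordSupport w)` nonzero entries, so it uses a coordinate outside `supp w`
    have hyw : ¬ coordSupport y ⊆ coordSupport w := fun h =>
      hsub (eq_of_subset_of_card_le h (hw.1.trans (not_lt.1 hcard))).symm.subset
    obtain ⟨j, hjy, hjw⟩ := not_subset.1 hyw
    rw [mem_coordSupport, not_not] at hjw
    exact (abs_apply_le_of_mem_projSet hy hiy (mem_coordSupport.1 hjy)).not_gt
      (hgap' i j (mem_coordSupport.1 hiw) hjw)

end SparseProjection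

lemma mem_projSet_of_tendsto {n : ℕ} {A : Set (EuclideanSpace ℝ (Fin n))} (hA : IsClosed A)
    {y z : ℕ → EuclideanSpace ℝ (Fin n)} {y₀ z₀ : EuclideanSpace ℝ (Fin n)}
    (hy : ∀ k, y k ∈ projSet A (z k)) (hyt : Tendsto y atTop (𝓝 y₀))
    (hzt : Tendsto z atTop (𝓝 z₀)) : y₀ ∈ projSet A z₀ :=
  ⟨hA.mem_of_tendsto hyt (Eventually.of_forall fun k => (hy k).1), fun x hx =>
    le_of_tendsto_of_tendsto' (hzt.sub hyt).norm (hzt.sub tendsto_const_nhds).norm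
      fun k => (hy k).2 x hx⟩

lemma sq_norm_sub_le_inner_of_mem_projSet {n : ℕ} {A : Set (EuclideanSpace ℝ (Fin n))}
    {x y g : EuclideanSpace ℝ (Fin n)} {lam : ℝ} (hx : x ∈ A)
    (hy : y ∈ projSet A (x - lam • g)) : ‖y - x‖ ^ 2 ≤ 2 * lam * inner ℝ g (x - y) := by
  have h := pow_le_pow_left₀ (norm_nonneg _) (hy.2 x hx) 2
  rw [show x - lam • g - y = (x - y) - lam • g by abel, sub_sub_cancel_left, norm_neg,
    norm_sub_sq_real, inner_smul_right, real_inner_comm, norm_sub_rev] at h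
  linarith

lemma le_of_mem_projSet_sub_smul_gradient {n : ℕ} {A : Set (EuclideanSpace ℝ (Fin n))}
    {f : EuclideanSpace ℝ (Fin n) → ℝ} {f' : EuclideanSpace ℝ (Fin n) → EuclideanSpace ℝ (Fin n)}
    {L lam : ℝ} (hgrad : ∀ x, HasGradientAt f (f' x) x)
    (hlip : ∀ x y, ‖f' x - f' y‖ ≤ L * ‖x - y‖) (hlam : 0 < lam)
    {x y : EuclideanSpace ℝ (Fin n)} (hx : x ∈ A) (hy : y ∈ projSet A (x - lam • f' x)) :
    f y + (1 / (2 * lam) - L / 2) * ‖y - x‖ ^ 2 ≤ f x := by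
  have hdesc := le_add_inner_add_sq_of_lipschitz_gradient hgrad hlip x y
  have hproj := sq_norm_sub_le_inner_of_mem_projSet hx hy
  rw [← neg_sub x y, inner_neg_right, norm_neg, ← norm_neg (x - y), neg_sub] at hdesc
  have : 1 / (2 * lam) * ‖y - x‖ ^ 2 ≤ inner ℝ (f' x) (x - y) := by
    rw [div_mul_eq_mul_div, one_mul, div_le_iff₀ (by positivity)]
    linarith
  linarith

lemma exists_norm_sub_le_mul_of_projSet_eq_singleton {n s : ℕ} (hsn : s ≤ n)
    {T : EuclideanSpace ℝ (Fin n) → EuclideanSpace ℝ (Fin n)} {w : EuclideanSpace ℝ (Fin n)}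
    {γ : ℝ} (hγ : γ ≤ 1) (hP : projSet (spSet n s) (T w) = {w})
    (hT : ∀ J : Finset (Fin n), J.card = s → w ∈ coordSub J →
      ∀ u ∈ coordSub J, ∀ v ∈ coordSub J, ‖T u - T v‖ ≤ γ * ‖u - v‖) :
    ∃ ε > 0, ∀ x ∈ spSet n s, ‖x - w‖ < ε →
      ∀ y ∈ projSet (spSet n s) (T x), ‖y - w‖ ≤ γ * ‖x - w‖ := by
  obtain ⟨δ, hδ, hδP⟩ :=
    Metric.eventually_nhds_iff.1 (eventually_coordSupport_subset_of_projSet_eq_singleton hP)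
  obtain ⟨ε, hε, hεw⟩ := Metric.eventually_nhds_iff.1 (eventually_coordSupport_subset w)
  refine ⟨min δ ε, lt_min hδ hε, fun x hx hxw y hy => ?_⟩
  have hwx : coordSupport w ⊆ coordSupport x :=
    hεw (by rw [dist_eq_norm]; exact hxw.trans_le (min_le_right _ _))
  obtain ⟨J, hxJ, hJ⟩ := Finset.exists_superset_card_eq hx (by simpa using hsn)
  have mem_coordSub : ∀ {v}, coordSupport v ⊆ J → v ∈ coordSub J := fun h i hi =>
    by_contra fun hv => hi (h (mem_coordSupport.2 hv))
  have hTx : ‖T x - T w‖ ≤ γ * ‖x - w‖ :=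
    hT J hJ (mem_coordSub (hwx.trans hxJ)) x (mem_coordSub hxJ) w (mem_coordSub (hwx.trans hxJ))
  have hTxw : dist (T x) (T w) < δ := by
    rw [dist_eq_norm]
    exact (hTx.trans (mul_le_of_le_one_left (norm_nonneg _) hγ)).trans_lt
      (hxw.trans_le (min_le_left _ _))
  exact (norm_sub_le_of_mem_projSet hy (hP.symm ▸ rfl) (hδP hTxw y hy)).trans hTx

theorem stmt6_general {n s : ℕ} (hsn : s ≤ n)
    (f : EuclideanSpace ℝ (Fin n) → ℝ)
    (f' : EuclideanSpace ℝ (Fin n) → EuclideanSpace ℝ (Fin n))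
    (L lam : ℝ) (hL : 0 < L)
    (hgrad : ∀ x, HasGradientAt f (f' x) x)
    (hlip : ∀ x y, ‖f' x - f' y‖ ≤ L * ‖x - y‖)
    (hbdd : BddBelow (f '' spSet n s))
    (hlam0 : 0 < lam) (hlamL : lam < 1 / L)
    (w : ℕ → EuclideanSpace ℝ (Fin n))
    (hw0 : w 0 ∈ spSet n s)
    (hiter : ∀ k, w (k + 1) ∈ projSet (spSet n s) (w k - lam • f' (w k)))
    (wstar : EuclideanSpace ℝ (Fin n))
    (haccum : ∃ φ : ℕ → ℕ, StrictMono φ ∧ Tendsto (fun k => w (φ k)) atTop (𝓝 wstar))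
    (hsingleton : ∃ p, projSet (spSet n s) (wstar - lam • f' wstar) = {p})
    (γ : ℝ) (hγ1 : γ < 1)
    (hcontract : ∀ J : Finset (Fin n), J.card = s → wstar ∈ coordSub J →
      ∀ u ∈ coordSub J, ∀ v ∈ coordSub J,
        ‖(u - lam • f' u) - (v - lam • f' v)‖ ≤ γ * ‖u - v‖) :
    ∃ N₂ : ℕ, ∀ k ≥ N₂, ‖w (k + 1) - wstar‖ ≤ γ * ‖w k - wstar‖ := by
  have hmem : ∀ k, w k ∈ spSet n s
    | 0 => hw0
    | k + 1 => (hiter k).1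
  have hc : 0 < 1 / (2 * lam) - L / 2 := by
    have hL' := (lt_one_div hlam0 hL).1 hlamL
    rw [show 1 / (2 * lam) - L / 2 = (1 / lam - L) / 2 by ring]
    linarith
  obtain ⟨B, hB⟩ := hbdd
  have hstep : Tendsto (fun k => w (k + 1) - w k) atTop (𝓝 0) :=
    tendsto_sub_of_sufficient_decrease hc (fun k => hB ⟨w k, hmem k, rfl⟩) fun k =>
      le_of_mem_projSet_sub_smul_gradient hgrad hlip hlam0 (hmem k) (hiter k)
  obtain ⟨φ, hφ, hφw⟩ := haccum
  have hT : Continuous fun x => x - lam • f' x :=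
    continuous_id.sub <| (LipschitzWith.of_dist_le' (K := L)
      (by simpa only [dist_eq_norm] using hlip)).continuous.const_smul lam
  have hfix : wstar ∈ projSet (spSet n s) (wstar - lam • f' wstar) :=
    mem_projSet_of_tendsto isClosed_spSet (fun k => hiter (φ k))
      (by simpa using hφw.add (hstep.comp hφ.tendsto_atTop)) ((hT.tendsto wstar).comp hφw)
  obtain ⟨p, hp⟩ := hsingleton
  have hP : projSet (spSet n s) (wstar - lam • f' wstar) = {wstar} := by
    rw [hp] at hfix ⊢
    rw [Set.mem_singleton_iff.1 hfix]
  obtain ⟨ε, hε, hloc⟩ :=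
    exists_norm_sub_le_mul_of_projSet_eq_singleton hsn hγ1.le hP hcontract
  obtain ⟨K, hK⟩ := Metric.tendsto_atTop.1 hφw ε hε
  exact ⟨φ K, forall_ge_succ_le_mul_of_lt hγ1.le (fun k => norm_nonneg _)
    (fun k hk => hloc _ (hmem k) hk _ (hiter k)) (by simpa [dist_eq_norm] using hK K le_rfl)⟩

/-- Q-linear convergence of PG under a contraction assumption on the
gradient-step map over the active subspaces. -/
theorem stmt6 {n s : ℕ} (hs1 : 1 ≤ s) (hsn : s ≤ n)
    (f : EuclideanSpace ℝ (Fin n) → ℝ)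
    (f' : EuclideanSpace ℝ (Fin n) → EuclideanSpace ℝ (Fin n))
    (L lam : ℝ) (hL : 0 < L)
    (hconv : ConvexOn ℝ Set.univ f)
    (hgrad : ∀ x, HasGradientAt f (f' x) x)
    (hlip : ∀ x y, ‖f' x - f' y‖ ≤ L * ‖x - y‖)
    (hbdd : BddBelow (f '' spSet n s))
    (hlam0 : 0 < lam) (hlamL : lam < 1 / L)
    (w : ℕ → EuclideanSpace ℝ (Fin n))
    (hw0 : w 0 ∈ spSet n s)
    (hiter : ∀ k, w (k + 1) ∈ projSet (spSet n s) (w k - lam • f' (w k)))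
    (wstar : EuclideanSpace ℝ (Fin n))
    (haccum : ∃ φ : ℕ → ℕ, StrictMono φ ∧ Tendsto (fun k => w (φ k)) atTop (𝓝 wstar))
    (hsingleton : ∃ p, projSet (spSet n s) (wstar - lam • f' wstar) = {p})
    (γ : ℝ) (hγ0 : 0 ≤ γ) (hγ1 : γ < 1)
    (hcontract : ∀ J : Finset (Fin n), J.card = s → wstar ∈ coordSub J →
      ∀ u ∈ coordSub J, ∀ v ∈ coordSub J,
        ‖(u - lam • f' u) - (v - lam • f' v)‖ ≤ γ * ‖u - v‖) :
    ∃ N₂ : ℕ, ∀ k ≥ N₂, ‖w (k + 1) - wstar‖ ≤ γ * ‖w k - wstar‖ :=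
  stmt6_general hsn f f' L lam hL hgrad hlip hbdd hlam0 hlamL w hw0 hiter wstar haccum hsingleton γ
    hγ1 hcontract
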